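/- arXiv:2111.03417 — 2 statements merged into one kernel-verified Lean document; each statement's English description precedes it below -/
import Mathlib

section
/- Let R be a commutative ring and T a Q-torsion R-module. Then for every R-module M and every natural number n, the R-module Tor_n^R(T, M) is Q-torsion. -/
open Polynomial TensorProduct

universe u v

/-- An ideal is *semi-regular* if it contains a finitely generated dense subideal
(an ideal is *dense* if its annihilator is zero). -/
def Ideal.IsSemiregular {R : Type*} [CommRing R] (I : Ideal R) : Prop :=
  ∃ J : Ideal R, J ≤ I ∧ J.FG ∧ Submodule.annihilator J = ⊥

/-- A module is *Q-torsion* if every element is annihilated by some finitely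
generated semi-regular ideal. -/
def IsQTorsion (R : Type*) (M : Type*) [CommRing R] [AddCommGroup M] [Module R M] : Prop :=
  ∀ m : M, ∃ I : Ideal R, I.FG ∧ I.IsSemiregular ∧ ∀ a ∈ I, a • m = 0

/-!
A product of semi-regular ideals is semi-regular, so the Q-torsion elements of a module form a
submodule; hence Q-torsion passes to submodules, quotients, and tensor products `T ⊗ N`, which are
spanned by pure tensors. `Tor_n(T, M)` is the homology of `T ⊗ P_•` for a projective resolution
`P_•` of `M`, i.e. a subquotient of the Q-torsion module `T ⊗ P_n`.
-/

namespace Ideal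

variable {R : Type*} [CommRing R]

lemma isSemiregular_top : (⊤ : Ideal R).IsSemiregular := by
  refine ⟨⊤, le_rfl, fg_top R, ?_⟩
  rw [Submodule.annihilator_top, Module.annihilator_eq_bot]
  infer_instance

lemma IsSemiregular.mul {I J : Ideal R} (hI : I.IsSemiregular) (hJ : J.IsSemiregular) :
    (I * J).IsSemiregular := by
  obtain ⟨I', hI'le, hI'fg, hI'ann⟩ := hI
  obtain ⟨J', hJ'le, hJ'fg, hJ'ann⟩ := hJ
  refine ⟨I' * J', mul_mono hI'le hJ'le, hI'fg.mul hJ'fg, ?_⟩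
  rw [Submodule.eq_bot_iff] at hI'ann hJ'ann ⊢
  intro a ha
  refine hI'ann a (Submodule.mem_annihilator.2 fun i hi => ?_)
  refine hJ'ann (a • i) (Submodule.mem_annihilator.2 fun j hj => ?_)
  simpa [smul_eq_mul, mul_assoc] using Submodule.mem_annihilator.1 ha (i * j) (mul_mem_mul hi hj)

end Ideal

namespace Submodule

variable (R M : Type*) [CommRing R] [AddCommGroup M] [Module R M]

def qTorsion : Submodule R M where
  carrier := {m | ∃ I : Ideal R, I.FG ∧ I.IsSemiregular ∧ ∀ a ∈ I, a • m = 0}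
  zero_mem' := ⟨⊤, Ideal.fg_top R, Ideal.isSemiregular_top, fun a _ => smul_zero a⟩
  add_mem' := by
    rintro x y ⟨I, hIfg, hIsr, hI⟩ ⟨J, hJfg, hJsr, hJ⟩
    refine ⟨I * J, hIfg.mul hJfg, hIsr.mul hJsr, fun a ha => ?_⟩
    rw [smul_add, hI a (Ideal.mul_le_left ha), hJ a (Ideal.mul_le_right ha), add_zero]
  smul_mem' := by
    rintro c m ⟨I, hIfg, hIsr, hI⟩
    exact ⟨I, hIfg, hIsr, fun a ha => by rw [smul_comm, hI a ha, smul_zero]⟩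

end Submodule

section IsQTorsion

variable {R : Type*} [CommRing R] {A B : Type*} [AddCommGroup A] [Module R A]
  [AddCommGroup B] [Module R B]

lemma isQTorsion_iff_qTorsion_eq_top : IsQTorsion R A ↔ Submodule.qTorsion R A = ⊤ :=
  (Submodule.eq_top_iff' (p := Submodule.qTorsion R A)).symm

lemma IsQTorsion.of_injective (f : A →ₗ[R] B) (hf : Function.Injective f)
    (hB : IsQTorsion R B) : IsQTorsion R A := fun a => by
  obtain ⟨I, hIfg, hIsr, hI⟩ := hB (f a)
  exact ⟨I, hIfg, hIsr, fun r hr => hf (by rw [map_smul, hI r hr, map_zero])⟩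

lemma IsQTorsion.of_surjective (f : A →ₗ[R] B) (hf : Function.Surjective f)
    (hA : IsQTorsion R A) : IsQTorsion R B := fun b => by
  obtain ⟨a, rfl⟩ := hf b
  obtain ⟨I, hIfg, hIsr, hI⟩ := hA a
  exact ⟨I, hIfg, hIsr, fun r hr => by rw [← map_smul, hI r hr, map_zero]⟩

lemma IsQTorsion.tensorProduct (hA : IsQTorsion R A) : IsQTorsion R (A ⊗[R] B) := by
  rw [isQTorsion_iff_qTorsion_eq_top, eq_top_iff, ← span_tmul_eq_top, Submodule.span_le]
  rintro _ ⟨a, b, rfl⟩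
  obtain ⟨I, hIfg, hIsr, hI⟩ := hA a
  exact ⟨I, hIfg, hIsr, fun r hr => by rw [smul_tmul', hI r hr, zero_tmul]⟩

end IsQTorsion

lemma CategoryTheory.ShortComplex.isQTorsion_homology {R : Type u} [CommRing R]
    (S : ShortComplex (ModuleCat.{v} R)) (h : IsQTorsion R S.X₂) : IsQTorsion R S.homology :=
  have hcycles : IsQTorsion R S.cycles :=
    h.of_injective S.iCycles.hom ((ModuleCat.mono_iff_injective _).1 inferInstance)
  hcycles.of_surjective S.homologyπ.hom ((ModuleCat.epi_iff_surjective _).1 inferInstance)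

open CategoryTheory in
/-- If `T` is a Q-torsion `R`-module, then `Tor_n^R(T, M)` is Q-torsion for every
`R`-module `M` and every `n ∈ ℕ`. -/
theorem statement8 (R : Type u) [CommRing R] (T : Type u) [AddCommGroup T] [Module R T]
    (hT : IsQTorsion R T) (M : Type u) [AddCommGroup M] [Module R M] (n : ℕ) :
    IsQTorsion R (((Tor (ModuleCat.{u} R) n).obj (ModuleCat.of R T)).obj (ModuleCat.of R M)) := by
  let P : ProjectiveResolution (ModuleCat.of R M) := HasProjectiveResolution.out.some
  let F := (MonoidalCategory.tensoringLeft (ModuleCat.{u} R)).obj (ModuleCat.of R T)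
  let K := (F.mapHomologicalComplex (ComplexShape.down ℕ)).obj P.complex
  have hK : IsQTorsion R (K.homology n) := (K.sc n).isQTorsion_homology hT.tensorProduct
  exact hK.of_surjective (P.isoLeftDerivedObj F n).inv.hom
    ((ModuleCat.epi_iff_surjective _).1 inferInstance)
end

section
/- Let R be a commutative ring. Every τ_q-flat R-module is w-flat if and only if R is a WQ-ring, i.e., if and only if every finitely generated semi-regular ideal of R is a GV-ideal. -/
/-
The implication from a WQ-ring is immediate: a Q-torsion module is GV-torsion as soon as every
ideal in Q is a GV-ideal. Conversely, let `I` be finitely generated and semi-regular. Since `I`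
kills `R ⧸ I`, it kills `Tor₁(R ⧸ I, -)`, so `R ⧸ I` is τ_q-flat, hence w-flat. Through a
projective resolution, `Tor₁(R ⧸ I, R ⧸ I)` maps onto `I ⧸ I²`, so every `x ∈ I` satisfies
`J x ⊆ I²` for some GV-ideal `J`; taking products over generators, one GV-ideal `J` has
`J I ⊆ I²`. As `I` is finitely generated with zero annihilator, Cayley–Hamilton puts `J` inside
`√I`, so some power of `J`, still a GV-ideal, lies in `I`, and a finitely generated ideal
containing a GV-ideal is a GV-ideal.
-/

open Polynomial TensorProduct

universe u v

open CategoryTheory in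
/-- `Tor_1^R(M, N)` as an `R`-module. -/
noncomputable def Tor1Mod (R : Type u) [CommRing R] (M N : Type u)
    [AddCommGroup M] [Module R M] [AddCommGroup N] [Module R N] : ModuleCat R :=
  ((Tor (ModuleCat.{u} R) 1).obj (ModuleCat.of R M)).obj (ModuleCat.of R N)

/-- A module is *τ_q-flat* if `Tor_1^R(M, N)` is Q-torsion for every module `N`. -/
def IsTauQFlat (R : Type u) [CommRing R] (M : Type u) [AddCommGroup M] [Module R M] : Prop :=
  ∀ (N : Type u) [AddCommGroup N] [Module R N], IsQTorsion R (Tor1Mod R M N)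

/-- A *GV-ideal* is a finitely generated ideal `J` such that the natural map
`R → Hom_R(J, R)`, sending `r` to multiplication by `r`, is bijective. -/
def Ideal.IsGV {R : Type*} [CommRing R] (J : Ideal R) : Prop :=
  J.FG ∧ Function.Bijective (fun r : R => (r • J.subtype : J →ₗ[R] R))

/-- A module is *GV-torsion* if every element is annihilated by some GV-ideal. -/
def IsGVTorsion (R : Type*) (M : Type*) [CommRing R] [AddCommGroup M] [Module R M] : Prop :=
  ∀ m : M, ∃ J : Ideal R, J.IsGV ∧ ∀ a ∈ J, a • m = 0

/-- A module is *w-flat* if `Tor_1^R(M, N)` is GV-torsion for every module `N`. -/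
def IsWFlat (R : Type u) [CommRing R] (M : Type u) [AddCommGroup M] [Module R M] : Prop :=
  ∀ (N : Type u) [AddCommGroup N] [Module R N], IsGVTorsion R (Tor1Mod R M N)

namespace Ideal

variable {R : Type*} [CommRing R] {I J J₁ J₂ : Ideal R}

theorem IsGV.eq_zero_of_forall_mul_eq_zero (h : J.IsGV) {r : R} (hr : ∀ a ∈ J, r * a = 0) :
    r = 0 :=
  h.2.injective <| LinearMap.ext fun a => by simpa using hr a a.2

noncomputable def IsGV.equiv (h : J.IsGV) : R ≃ₗ[R] (J →ₗ[R] R) :=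
  LinearEquiv.ofBijective (LinearMap.toSpanSingleton R _ J.subtype) h.2

theorem IsGV.equiv_symm_mul (h : J.IsGV) (f : J →ₗ[R] R) (a : J) :
    h.equiv.symm f * a = f a :=
  LinearMap.congr_fun (h.equiv.apply_symm_apply f) a

theorem isGV_of_forall (hfg : J.FG) (hinj : ∀ r : R, (∀ a ∈ J, r * a = 0) → r = 0)
    (hsurj : ∀ f : J →ₗ[R] R, ∃ r : R, ∀ a : J, f a = r * a) : J.IsGV := by
  refine ⟨hfg, (injective_iff_map_eq_zero (LinearMap.toSpanSingleton R _ J.subtype)).2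
    fun r hr => hinj r fun a ha => ?_, fun f => ?_⟩
  · simpa using LinearMap.congr_fun hr ⟨a, ha⟩
  · obtain ⟨r, hr⟩ := hsurj f
    exact ⟨r, LinearMap.ext fun a => by simp [hr]⟩

theorem isGV_top : (⊤ : Ideal R).IsGV := by
  refine isGV_of_forall ⟨{1}, by simp⟩ (fun r hr => by simpa using hr 1 trivial)
    fun f => ⟨f ⟨1, trivial⟩, fun a => ?_⟩
  rw [mul_comm, ← smul_eq_mul, ← map_smul]
  congr
  ext
  simp

theorem IsGV.mul (h₁ : J₁.IsGV) (h₂ : J₂.IsGV) : (J₁ * J₂).IsGV := by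
  refine isGV_of_forall (h₁.1.mul h₂.1) (fun r hr => ?_) fun f => ?_
  · refine h₂.eq_zero_of_forall_mul_eq_zero fun b hb => h₁.eq_zero_of_forall_mul_eq_zero
      fun a ha => ?_
    rw [mul_assoc, mul_comm b]
    exact hr _ (mul_mem_mul ha hb)
  · let μ : J₁ →ₗ[R] J₂ →ₗ[R] (J₁ * J₂ : Ideal R) :=
      LinearMap.mk₂ R (fun a b => ⟨a * b, mul_mem_mul a.2 b.2⟩)
        (fun _ _ _ => Subtype.ext (add_mul _ _ _)) (fun _ _ _ => Subtype.ext (mul_assoc _ _ _))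
        (fun _ _ _ => Subtype.ext (mul_add _ _ _)) (fun _ _ _ => Subtype.ext (mul_left_comm _ _ _))
    let g := (μ.compr₂ f).flip
    -- `f (a * b) = r_b * a` for a unique `r_b`, and `b ↦ r_b` is multiplication by some `s`
    let s := h₂.equiv.symm (h₁.equiv.symm.toLinearMap ∘ₗ g)
    refine ⟨s, fun ⟨z, hz⟩ => ?_⟩
    induction hz using Submodule.mul_induction_on' with
    | mem_mul_mem a ha b hb =>
      calc f ⟨a * b, _⟩ = h₁.equiv.symm (g ⟨b, hb⟩) * a :=
            (h₁.equiv_symm_mul (g ⟨b, hb⟩) ⟨a, ha⟩).symm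
        _ = s * b * a :=
            congrArg (· * a) (h₂.equiv_symm_mul (h₁.equiv.symm.toLinearMap ∘ₗ g) ⟨b, hb⟩).symm
        _ = s * (a * b) := by ring
    | add x hx y hy ihx ihy =>
      rw [show (⟨x + y, add_mem hx hy⟩ : (J₁ * J₂ : Ideal R)) = ⟨x, hx⟩ + ⟨y, hy⟩ from rfl,
        map_add, ihx, ihy]
      exact (mul_add _ _ _).symm

theorem IsGV.of_le (h : J.IsGV) (hJI : J ≤ I) (hI : I.FG) : I.IsGV := by
  refine isGV_of_forall hI (fun r hr => h.eq_zero_of_forall_mul_eq_zero fun a ha => hr a (hJI ha))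
    fun f => ?_
  let r := h.equiv.symm (f ∘ₗ Submodule.inclusion hJI)
  refine ⟨r, fun x => sub_eq_zero.1 <| h.eq_zero_of_forall_mul_eq_zero fun a ha => ?_⟩
  have hax : a * x ∈ J := J.mul_mem_right _ ha
  have : f (a • x) = r * (a * x) :=
    (h.equiv_symm_mul (f ∘ₗ Submodule.inclusion hJI) ⟨_, hax⟩).symm
  rw [map_smul, smul_eq_mul] at this
  linear_combination this

theorem IsGV.pow (h : J.IsGV) (k : ℕ) : (J ^ k).IsGV := by
  induction k with
  | zero => simpa using isGV_top
  | succ k ih => rw [pow_succ]; exact ih.mul h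

theorem isGV_prod {ι : Type*} (s : Finset ι) {J : ι → Ideal R} (h : ∀ i ∈ s, (J i).IsGV) :
    (∏ i ∈ s, J i).IsGV :=
  Finset.prod_induction _ IsGV (fun _ _ => IsGV.mul) (by simpa using isGV_top) h

theorem mem_radical_of_forall_mul_mem_mul (hfg : I.FG) (hI : Submodule.annihilator I = ⊥)
    {a : R} (ha : ∀ x ∈ I, a * x ∈ I * I) : a ∈ I.radical := by
  have : Module.Finite R I := Module.Finite.iff_fg.mpr hfg
  have hrange : LinearMap.range (algebraMap R (Module.End R I) a) ≤ I • ⊤ := by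
    rintro _ ⟨x, rfl⟩
    rw [Submodule.mem_smul_top_iff]
    exact ha x x.2
  -- Cayley–Hamilton: `a` is integral over `I`, with an equation whose lower coefficients lie in `I`
  obtain ⟨p, hmonic, -, hcoeff, hp⟩ :=
    LinearMap.exists_monic_and_natDegree_eq_and_coeff_mem_pow_and_aeval_eq_zero R _ I hrange
  have hroot : p.IsRoot a := by
    rw [Polynomial.aeval_algebraMap_apply, Polynomial.coe_aeval_eq_eval] at hp
    have : p.eval a ∈ Submodule.annihilator I := Submodule.mem_annihilator.2 fun x hx =>
      congrArg Subtype.val (LinearMap.congr_fun hp ⟨x, hx⟩)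
    simpa [hI] using this
  have hweak : p.IsWeaklyEisensteinAt I :=
    ⟨fun hk => Ideal.pow_le_self (Nat.sub_ne_zero_of_lt hk) (hcoeff _)⟩
  exact ⟨_, hweak.pow_natDegree_le_of_root_of_monic_mem hroot hmonic _ le_rfl⟩

theorem exists_isGV_forall_mul_mem (hfg : I.FG) {K : Ideal R}
    (h : ∀ x ∈ I, ∃ J : Ideal R, J.IsGV ∧ ∀ a ∈ J, a * x ∈ K) :
    ∃ J : Ideal R, J.IsGV ∧ ∀ a ∈ J, ∀ x ∈ I, a * x ∈ K := by
  classical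
  obtain ⟨s, rfl⟩ := hfg
  choose Jx hJx hJxK using h
  refine ⟨∏ x ∈ s.attach, Jx x (subset_span x.2), isGV_prod _ fun x _ => hJx _ _,
    fun a ha x hx => ?_⟩
  induction hx using Submodule.span_induction with
  | mem y hy =>
    exact hJxK y _ a (prod_le_inf.trans (Finset.inf_le (Finset.mem_attach _ ⟨y, hy⟩)) ha)
  | zero => simp
  | add y z _ _ hy hz => rw [mul_add]; exact add_mem hy hz
  | smul r y _ hy => rw [smul_eq_mul, mul_left_comm]; exact K.mul_mem_left r hy

theorem isGV_of_forall_exists_isGV_mul_mem_mul (hfg : I.FG) (hI : Submodule.annihilator I = ⊥)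
    (h : ∀ x ∈ I, ∃ J : Ideal R, J.IsGV ∧ ∀ a ∈ J, a * x ∈ I * I) : I.IsGV := by
  obtain ⟨J, hJ, hJI⟩ := exists_isGV_forall_mul_mem hfg h
  obtain ⟨k, hk⟩ := exists_pow_le_of_le_radical_of_fg
    (fun a ha => mem_radical_of_forall_mul_mem_mul hfg hI (hJI a ha)) hJ.1
  exact (hJ.pow k).of_le hk hfg

theorem IsSemiregular.annihilator_eq_bot (h : I.IsSemiregular) : Submodule.annihilator I = ⊥ := by
  obtain ⟨J, hJI, -, hJ⟩ := h
  exact eq_bot_iff.2 (hJ ▸ Submodule.annihilator_mono hJI)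

end Ideal

open CategoryTheory MonoidalCategory

namespace CategoryTheory.ShortComplex

variable {R : Type u} [Ring R] (S : ShortComplex (ModuleCat.{v} R))

theorem moduleCat_smul_homology_eq_zero {a : R} (ha : ∀ x : S.X₂, a • x = 0) (h : S.homology) :
    a • h = 0 := by
  let e : S.homology ≃ₗ[R] LinearMap.ker S.g.hom ⧸ LinearMap.range S.moduleCatToCycles :=
    S.moduleCatHomologyIso.toLinearEquiv
  obtain ⟨ξ, hξ⟩ := Submodule.Quotient.mk_surjective _ (e h)
  rw [← e.map_eq_zero_iff, map_smul, ← hξ, ← Submodule.Quotient.mk_smul,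
    show a • ξ = 0 from Subtype.ext (ha ξ), Submodule.Quotient.mk_zero]

theorem exists_moduleCat_homology_smul_eq_zero_imp {T : Type*} [AddCommGroup T] [Module R T]
    (φ : S.X₂ →ₗ[R] T) (hφ : ∀ w, φ (S.f w) = 0) {ξ : S.X₂} (hξ : S.g ξ = 0) :
    ∃ h : S.homology, ∀ a : R, a • h = 0 → a • φ ξ = 0 := by
  let e : S.homology ≃ₗ[R] LinearMap.ker S.g.hom ⧸ LinearMap.range S.moduleCatToCycles :=
    S.moduleCatHomologyIso.toLinearEquiv
  refine ⟨e.symm (Submodule.Quotient.mk ⟨ξ, hξ⟩), fun a ha => ?_⟩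
  rw [← e.symm.map_smul, LinearEquiv.map_eq_zero_iff, ← Submodule.Quotient.mk_smul,
    Submodule.Quotient.mk_eq_zero] at ha
  obtain ⟨w, hw⟩ := ha
  rw [← map_smul, ← hφ w]
  exact congrArg φ (congrArg Subtype.val hw).symm

end CategoryTheory.ShortComplex

section Tor1

variable {R : Type u} [CommRing R] {N : Type u} [AddCommGroup N] [Module R N]

theorem CategoryTheory.ProjectiveResolution.exists_moduleCat_augmentation
    (P : ProjectiveResolution (ModuleCat.of R N)) :
    ∃ ε : P.complex.X 0 →ₗ[R] N,
      Function.Surjective ε ∧ LinearMap.ker ε = LinearMap.range (P.complex.d 1 0).hom := by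
  let u := HomologicalComplex.singleObjXSelf (ComplexShape.down ℕ) 0 (ModuleCat.of R N)
  refine ⟨(P.π.f 0 ≫ u.hom).hom, (ModuleCat.epi_iff_surjective _).1 inferInstance, ?_⟩
  rw [ModuleCat.hom_comp, LinearMap.ker_comp_of_ker_eq_bot _
    (LinearMap.ker_eq_bot_of_injective ((ModuleCat.mono_iff_injective _).1 inferInstance))]
  exact (ShortComplex.exact_of_g_is_cokernel (ShortComplex.mk _ _ P.complex_d_comp_π_f_zero)
    P.isColimitCokernelCofork).moduleCat_range_eq_ker.symm

variable (M : Type u) [AddCommGroup M] [Module R M]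

abbrev tensorResolution (P : ProjectiveResolution (ModuleCat.of R N)) :
    ShortComplex (ModuleCat.{u} R) :=
  ((((tensoringLeft (ModuleCat.{u} R)).obj (ModuleCat.of R M)).mapHomologicalComplex _).obj
    P.complex).sc' 2 1 0

noncomputable def tor1ModIso (P : ProjectiveResolution (ModuleCat.of R N)) :
    Tor1Mod R M N ≅ (tensorResolution M P).homology :=
  P.isoLeftDerivedObj _ 1 ≪≫ HomologicalComplex.homologyIsoSc' _ 2 1 0 (by simp) (by simp)

theorem tor1Mod_smul_eq_zero {a : R} (ha : ∀ m : M, a • m = 0) (t : Tor1Mod R M N) : a • t = 0 := by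
  obtain ⟨P⟩ := HasProjectiveResolution.out (Z := ModuleCat.of R N)
  let e := (tor1ModIso M P).toLinearEquiv
  rw [← e.map_eq_zero_iff, map_smul]
  have hX₂ (x : M ⊗[R] P.complex.X 1) : a • x = 0 := by
    induction x using TensorProduct.induction_on with
    | zero => exact smul_zero a
    | tmul m p => rw [TensorProduct.smul_tmul', ha, TensorProduct.zero_tmul]
    | add x y hx hy => rw [smul_add, hx, hy, add_zero]
  exact ShortComplex.moduleCat_smul_homology_eq_zero _ hX₂ _

end Tor1

section Tor1Quotient

variable {R : Type u} [CommRing R]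

noncomputable def Ideal.quotTensorToQuotMul (I : Ideal R) {P : Type*} [AddCommGroup P] [Module R P]
    (ψ : P →ₗ[R] R) (hψ : ∀ p, ψ p ∈ I) : (R ⧸ I) ⊗[R] P →ₗ[R] R ⧸ (I * I) :=
  (I • ⊤ : Submodule R P).liftQ ((I * I).mkQ ∘ₗ ψ)
      (Submodule.smul_le.2 fun r hr p _ => by
        rw [LinearMap.mem_ker, LinearMap.comp_apply, map_smul, Submodule.mkQ_apply,
          Submodule.Quotient.mk_eq_zero]
        exact Ideal.mul_mem_mul hr (hψ p)) ∘ₗ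
    (TensorProduct.quotTensorEquivQuotSMul P I).toLinearMap

theorem Ideal.quotTensorToQuotMul_mk_tmul (I : Ideal R) {P : Type*} [AddCommGroup P] [Module R P]
    (ψ : P →ₗ[R] R) (hψ : ∀ p, ψ p ∈ I) (r : R) (p : P) :
    I.quotTensorToQuotMul ψ hψ (Ideal.Quotient.mk I r ⊗ₜ p) =
      Ideal.Quotient.mk (I * I) (r * ψ p) := by
  simp [Ideal.quotTensorToQuotMul, Algebra.smul_def]

/-- `ψ` induces the map `Tor₁(R ⧸ I, R ⧸ I) → I ⧸ I²`; it is `σ ∘ d₁` for a lift `σ : P₀ → R`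
of the augmentation `P₀ → R ⧸ I`. -/
theorem CategoryTheory.ProjectiveResolution.exists_quotient_cocycle (I : Ideal R)
    (P : ProjectiveResolution (ModuleCat.of R (R ⧸ I))) :
    ∃ ψ : P.complex.X 1 →ₗ[R] R, (∀ p, ψ p ∈ I) ∧ ψ ∘ₗ (P.complex.d 2 1).hom = 0 ∧
      ∀ x ∈ I, ∃ p, (P.complex.d 1 0).hom p ∈ I • (⊤ : Submodule R (P.complex.X 0)) ∧
        ψ p - x ∈ I * I := by
  obtain ⟨ε, hε, hker⟩ := P.exists_moduleCat_augmentation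
  obtain ⟨σ, hσ⟩ := Module.projective_lifting_property I.mkQ ε I.mkQ_surjective
  have hσ' (p : P.complex.X 0) : Ideal.Quotient.mk I (σ p) = ε p := LinearMap.congr_fun hσ p
  refine ⟨σ ∘ₗ (P.complex.d 1 0).hom, fun p => ?_, ?_, fun x hx => ?_⟩
  · rw [← Ideal.Quotient.eq_zero_iff_mem, LinearMap.comp_apply, hσ', ← LinearMap.mem_ker, hker]
    exact LinearMap.mem_range_self _ p
  · rw [LinearMap.comp_assoc, ← ModuleCat.hom_comp, P.complex.d_comp_d, ModuleCat.hom_zero,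
      LinearMap.comp_zero]
  · obtain ⟨p₀, hp₀⟩ := hε 1
    obtain ⟨p₁, hp₁⟩ : x • p₀ ∈ LinearMap.range (P.complex.d 1 0).hom := by
      rw [← hker, LinearMap.mem_ker, map_smul, hp₀, Algebra.smul_def, mul_one]
      exact Ideal.Quotient.eq_zero_iff_mem.2 hx
    have hσp₀ : σ p₀ - 1 ∈ I := by
      rw [← Ideal.Quotient.eq, hσ', hp₀, map_one]
    refine ⟨p₁, hp₁ ▸ Submodule.smul_mem_smul hx trivial, ?_⟩
    rw [LinearMap.comp_apply, hp₁, map_smul, smul_eq_mul]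
    simpa [mul_sub] using Ideal.mul_mem_mul hx hσp₀

theorem exists_tor1Mod_quotient_smul_eq_zero_imp_mul_mem (I : Ideal R) {x : R} (hx : x ∈ I) :
    ∃ t : Tor1Mod R (R ⧸ I) (R ⧸ I), ∀ a : R, a • t = 0 → a * x ∈ I * I := by
  obtain ⟨P⟩ := HasProjectiveResolution.out (Z := ModuleCat.of R (R ⧸ I))
  obtain ⟨ψ, hψ, hψd, hψx⟩ := P.exists_quotient_cocycle I
  obtain ⟨p, hpI, hpx⟩ := hψx x hx
  let φ := I.quotTensorToQuotMul ψ hψ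
  have hφ : φ ∘ₗ (P.complex.d 2 1).hom.lTensor (R ⧸ I) = 0 := by
    refine TensorProduct.ext' fun m q => ?_
    obtain ⟨r, rfl⟩ := Ideal.Quotient.mk_surjective m
    have : ψ ((P.complex.d 2 1).hom q) = 0 := LinearMap.congr_fun hψd q
    simp [φ, Ideal.quotTensorToQuotMul_mk_tmul, this]
  have hξ : (tensorResolution (R ⧸ I) P).g ((1 : R ⧸ I) ⊗ₜ[R] p) = 0 := by
    change (1 : R ⧸ I) ⊗ₜ[R] (P.complex.d 1 0).hom p = 0
    rwa [← (TensorProduct.quotTensorEquivQuotSMul _ I).map_eq_zero_iff,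
      TensorProduct.quotTensorEquivQuotSMul_mk_one_tmul, Submodule.Quotient.mk_eq_zero]
  have hφξ : φ ((1 : R ⧸ I) ⊗ₜ[R] p) = Ideal.Quotient.mk (I * I) x := by
    rwa [← map_one (Ideal.Quotient.mk I), Ideal.quotTensorToQuotMul_mk_tmul, one_mul,
      Ideal.Quotient.eq]
  obtain ⟨h, hh⟩ := (tensorResolution (R ⧸ I) P).exists_moduleCat_homology_smul_eq_zero_imp φ
    (fun w => LinearMap.congr_fun hφ w) hξ
  refine ⟨(tor1ModIso _ P).toLinearEquiv.symm h, fun a ha => ?_⟩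
  rw [← LinearEquiv.map_smul, LinearEquiv.map_eq_zero_iff] at ha
  have : a • Ideal.Quotient.mk (I * I) x = 0 := by rw [← hφξ]; exact hh a ha
  rwa [Algebra.smul_def, Ideal.Quotient.algebraMap_eq, ← map_mul,
    Ideal.Quotient.eq_zero_iff_mem] at this

end Tor1Quotient

theorem isTauQFlat_quotient {R : Type u} [CommRing R] {I : Ideal R} (hfg : I.FG)
    (hI : I.IsSemiregular) : IsTauQFlat R (R ⧸ I) := fun _ _ _ t =>
  ⟨I, hfg, hI, fun a ha => tor1Mod_smul_eq_zero _ (fun m => by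
    obtain ⟨r, rfl⟩ := Ideal.Quotient.mk_surjective m
    rw [Algebra.smul_def, Ideal.Quotient.algebraMap_eq, ← map_mul,
      Ideal.Quotient.eq_zero_iff_mem]
    exact I.mul_mem_right r ha) t⟩

/-- Every τ_q-flat `R`-module is w-flat if and only if `R` is a WQ-ring, i.e. every
finitely generated semi-regular ideal of `R` is a GV-ideal. -/
theorem statement12 (R : Type u) [CommRing R] :
    (∀ (M : Type u) [AddCommGroup M] [Module R M], IsTauQFlat R M → IsWFlat R M) ↔
      (∀ I : Ideal R, I.FG → I.IsSemiregular → I.IsGV) := by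
  constructor
  · intro h I hfg hI
    have hflat : IsWFlat R (R ⧸ I) := h _ (isTauQFlat_quotient hfg hI)
    refine Ideal.isGV_of_forall_exists_isGV_mul_mem_mul hfg hI.annihilator_eq_bot fun x hx => ?_
    obtain ⟨t, ht⟩ := exists_tor1Mod_quotient_smul_eq_zero_imp_mul_mem I hx
    obtain ⟨J, hJ, hJt⟩ := hflat (R ⧸ I) t
    exact ⟨J, hJ, fun a ha => ht a (hJt a ha)⟩
  · intro h M _ _ hM N _ _ t
    obtain ⟨I, hfg, hI, hIt⟩ := hM N t
    exact ⟨I, h I hfg hI, hIt⟩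
end
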